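/- Let X₁ and X₂ be independent and identically distributed absolutely continuous real-valued random variables, symmetrically distributed about θ. Then for every ω with 0 ≤ ω < 1, the convex combination ωX₁ + (1 − ω)X₂ is Pitman closer to θ than X₁, i.e., P(|ωX₁ + (1 − ω)X₂ − θ| < |X₁ − θ|) ≥ 1/2. -/

import Mathlib

/-!
If `X₁, X₂` are i.i.d., the pair `(X₁, X₂)` is exchangeable, so `|X₂ - θ| < |X₁ - θ|` and
`|X₁ - θ| < |X₂ - θ|` are equally likely; the law of `|X₁ - θ|` has no atoms, so ties are null
and the first event has probability at least `1/2`. On that event the triangle inequality makes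
`wX₁ + (1 - w)X₂` strictly closer to `θ` than `X₁`.
-/

open MeasureTheory ProbabilityTheory

namespace ProbabilityTheory

variable {Ω : Type*} [MeasurableSpace Ω] {μ : Measure Ω}

lemma IdentDistrib.measure_lt_swap_of_indepFun [IsFiniteMeasure μ] {U V : Ω → ℝ}
    (hUV : IdentDistrib U V μ μ) (hind : IndepFun U V μ) :
    μ {ω | V ω < U ω} = μ {ω | U ω < V ω} :=
  (hUV.prodMk hUV.symm hind hind.symm).measure_mem_eq
    (measurableSet_lt measurable_snd measurable_fst)

lemma IndepFun.measure_eq_eq_zero {α : Type*} [MeasurableSpace α] [MeasurableEq α]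
    [IsFiniteMeasure μ] {U V : Ω → α} (hU : AEMeasurable U μ) (hV : AEMeasurable V μ)
    (hind : IndepFun U V μ) [NullSingletonClass (μ.map U)] :
    μ {ω | U ω = V ω} = 0 := by
  have hlaw : μ.map (fun ω => (U ω, V ω)) = (μ.map U).prod (μ.map V) :=
    (indepFun_iff_map_prod_eq_prod_map_map hU hV).mp hind
  calc μ {ω | U ω = V ω} = μ.map (fun ω => (U ω, V ω)) (Set.diagonal α) :=
        (Measure.map_apply_of_aemeasurable (hU.prodMk hV) measurableSet_diagonal).symm
    _ = ∫⁻ y, μ.map U {y} ∂(μ.map V) := by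
        rw [hlaw, Measure.prod_apply_symm measurableSet_diagonal]
        rfl
    _ = 0 := by simp

lemma IdentDistrib.half_le_measure_lt_of_indepFun [IsProbabilityMeasure μ] {U V : Ω → ℝ}
    (hUV : IdentDistrib U V μ μ) (hind : IndepFun U V μ) (hties : μ {ω | U ω = V ω} = 0) :
    1 / 2 ≤ μ {ω | V ω < U ω} := by
  have hcover : Set.univ ⊆ {ω | V ω < U ω} ∪ {ω | U ω < V ω} ∪ {ω | U ω = V ω} := by
    intro ω _
    rcases lt_trichotomy (U ω) (V ω) with h | h | h <;> simp [h]
  refine ENNReal.div_le_of_le_mul ?_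
  calc 1 = μ Set.univ := measure_univ.symm
    _ ≤ μ {ω | V ω < U ω} + μ {ω | U ω < V ω} + μ {ω | U ω = V ω} :=
      (measure_mono hcover).trans <| (measure_union_le _ _).trans <| by
        gcongr; exact measure_union_le _ _
    _ = μ {ω | V ω < U ω} * 2 := by
      rw [hties, add_zero, ← hUV.measure_lt_swap_of_indepFun hind, mul_two]

end ProbabilityTheory

lemma nullSingletonClass_map_abs_sub (ν : Measure ℝ) [NullSingletonClass ν] (θ : ℝ) :
    NullSingletonClass (ν.map fun x => |x - θ|) := by
  refine ⟨fun c => ?_⟩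
  have hfibre : (fun x => |x - θ|) ⁻¹' {c} ⊆ {θ + c, θ - c} := by
    intro x hx
    simp only [Set.mem_preimage, Set.mem_singleton_iff] at hx
    simp only [Set.mem_insert_iff, Set.mem_singleton_iff]
    rcases abs_eq (hx ▸ abs_nonneg _ : 0 ≤ c) |>.mp hx with h | h
    · left; linarith
    · right; linarith
  rw [Measure.map_apply (by fun_prop) (measurableSet_singleton c)]
  exact measure_mono_null hfibre ((Set.toFinite _).measure_zero ν)

lemma abs_convex_comb_sub_lt {a b θ w : ℝ} (hw0 : 0 ≤ w) (hw1 : w < 1)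
    (hba : |b - θ| < |a - θ|) : |w * a + (1 - w) * b - θ| < |a - θ| :=
  calc |w * a + (1 - w) * b - θ| = |w * (a - θ) + (1 - w) * (b - θ)| := by congr 1; ring
    _ ≤ |w * (a - θ)| + |(1 - w) * (b - θ)| := abs_add_le _ _
    _ = w * |a - θ| + (1 - w) * |b - θ| := by
      rw [abs_mul, abs_mul, abs_of_nonneg hw0, abs_of_nonneg (sub_nonneg.mpr hw1.le)]
    _ < |a - θ| := by nlinarith

theorem convex_combination_pitman_closer_iid_general
    {Ω : Type*} [MeasurableSpace Ω] (μ : Measure Ω) [IsProbabilityMeasure μ]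
    (X₁ X₂ : Ω → ℝ) (hX₁meas : Measurable X₁) (hX₂meas : Measurable X₂)
    (hindep : IndepFun X₁ X₂ μ)
    -- identically distributed
    (hident : Measure.map X₁ μ = Measure.map X₂ μ) (θ : ℝ)
    -- absolute continuity
    (hac : HasPDF X₁ μ) :
    ∀ w : ℝ, 0 ≤ w → w < 1 →
      (μ {ω | |w * X₁ ω + (1 - w) * X₂ ω - θ| < |X₁ ω - θ|}).toReal ≥ 1 / 2 := by
  intro w hw0 hw1
  have hdist : Measurable fun x : ℝ => |x - θ| := by fun_prop
  have hUV : IdentDistrib (fun ω => |X₁ ω - θ|) (fun ω => |X₂ ω - θ|) μ μ :=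
    (IdentDistrib.mk hX₁meas.aemeasurable hX₂meas.aemeasurable hident).comp hdist
  have hind : IndepFun (fun ω => |X₁ ω - θ|) (fun ω => |X₂ ω - θ|) μ := hindep.comp hdist hdist
  have : NullSingletonClass (μ.map X₁) := ⟨fun a => hac.absolutelyContinuous (by simp)⟩
  have : NullSingletonClass (μ.map fun ω => |X₁ ω - θ|) := by
    simpa only [Measure.map_map hdist hX₁meas, Function.comp_def] using
      nullSingletonClass_map_abs_sub (μ.map X₁) θ
  have hhalf := hUV.half_le_measure_lt_of_indepFun hind <|
    hind.measure_eq_eq_zero hUV.aemeasurable_fst hUV.aemeasurable_snd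
  have hcloser : 1 / 2 ≤ μ {ω | |w * X₁ ω + (1 - w) * X₂ ω - θ| < |X₁ ω - θ|} :=
    hhalf.trans <| measure_mono fun ω (h : |X₂ ω - θ| < |X₁ ω - θ|) =>
      abs_convex_comb_sub_lt hw0 hw1 h
  simpa using ENNReal.toReal_mono (measure_ne_top μ _) hcloser

/-- Corollary 2.  Let `X₁` and `X₂` be i.i.d. absolutely continuous
real random variables, each symmetric about `θ`.  Then for every `0 ≤ ω < 1` the convex
combination `ωX₁ + (1 - ω)X₂` is Pitman closer to `θ` than `X₁`. -/
theorem convex_combination_pitman_closer_iid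
    {Ω : Type*} [MeasurableSpace Ω] (μ : Measure Ω) [IsProbabilityMeasure μ]
    (X₁ X₂ : Ω → ℝ) (hX₁meas : Measurable X₁) (hX₂meas : Measurable X₂)
    (hindep : IndepFun X₁ X₂ μ)
    -- identically distributed
    (hident : Measure.map X₁ μ = Measure.map X₂ μ) (θ : ℝ)
    -- symmetry about `θ`
    (hsym : Measure.map (fun ω => X₁ ω - θ) μ = Measure.map (fun ω => θ - X₁ ω) μ)
    -- absolute continuity
    (hac : HasPDF X₁ μ) :
    ∀ w : ℝ, 0 ≤ w → w < 1 →
      (μ {ω | |w * X₁ ω + (1 - w) * X₂ ω - θ| < |X₁ ω - θ|}).toReal ≥ 1 / 2 :=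
  convex_combination_pitman_closer_iid_general μ X₁ X₂ hX₁meas hX₂meas hindep hident θ hac
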